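/- arXiv:2601.21717 — 2 statements merged into one kernel-verified Lean document; each statement's English description precedes it below -/
import Mathlib

section
/- Deterministic Lipschitz estimate for a ULA block: let L = 1 − αη ∈ [0,1) with η ≤ 1/α, let g_i denote the i-th ULA iterate as a function of (x̃₀, z₁, …, z_{m+n}) (with x̃₀ scaled so that |∂ in x̃₀| contributes a factor √κ₀ L^i). If κ₀ L^{m+1} ≤ 2η, then Σ_{i=m+1}^{m+n} |g_i(x̃₀, z₁,…) − g_i(x̃₀', z₁',…)|² ≤ (2/(α²η)) (|x̃₀ − x̃₀'|² + Σ_j |z_j − z_j'|²). -/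
open Real Finset

private lemma geomIcc_aux (r : ℝ) (hr0 : 0 ≤ r) (k : ℕ) :
    (∑ j ∈ Finset.Icc 1 k, r ^ (k - j)) * (1 - r) ≤ 1 := by
  induction k with
  | zero => simp
  | succ k ih =>
    rw [Finset.sum_Icc_succ_top (by omega : 1 ≤ k + 1)]
    have hcong : ∀ j ∈ Finset.Icc 1 k, r ^ (k + 1 - j) = r * r ^ (k - j) := by
      intro j hj
      simp only [Finset.mem_Icc] at hj
      rw [show k + 1 - j = (k - j) + 1 by omega, pow_succ]
      ring
    rw [Finset.sum_congr rfl hcong, ← Finset.mul_sum]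
    simp only [Nat.sub_self, pow_zero]
    have hs : 0 ≤ ∑ j ∈ Finset.Icc 1 k, r ^ (k - j) :=
      Finset.sum_nonneg fun j _ => pow_nonneg hr0 _
    nlinarith [ih, mul_nonneg hr0 hs]

set_option maxHeartbeats 1000000 in
theorem stmt_8 (d m n : ℕ) (α η κ₀ L : ℝ)
    (hα : 0 < α) (hη : 0 < η) (hηα : η ≤ 1 / α)
    (hL : L = 1 - α * η) (hL0 : 0 ≤ L) (hL1 : L < 1) (hκ₀ : 0 ≤ κ₀)
    (g : ℕ → EuclideanSpace ℝ (Fin d) × (ℕ → EuclideanSpace ℝ (Fin d)) →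
      EuclideanSpace ℝ (Fin d))
    (hg : ∀ (i : ℕ) (x x' : EuclideanSpace ℝ (Fin d))
      (z z' : ℕ → EuclideanSpace ℝ (Fin d)),
      ‖g i (x, z) - g i (x', z')‖
        ≤ Real.sqrt κ₀ * L ^ i * ‖x - x'‖
          + ∑ j ∈ Finset.Icc 1 i, Real.sqrt (2 * η) * L ^ (i - j) * ‖z j - z' j‖)
    (hburn : κ₀ * L ^ (m + 1) ≤ 2 * η)
    (x x' : EuclideanSpace ℝ (Fin d)) (z z' : ℕ → EuclideanSpace ℝ (Fin d)) :
    ∑ i ∈ Finset.Icc (m + 1) (m + n), ‖g i (x, z) - g i (x', z')‖ ^ 2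
      ≤ (2 / (α ^ 2 * η))
        * (‖x - x'‖ ^ 2 + ∑ j ∈ Finset.Icc 1 (m + n), ‖z j - z' j‖ ^ 2) := by
  obtain rfl | hn := Nat.eq_zero_or_pos n
  · rw [Nat.add_zero, Finset.Icc_eq_empty (by omega), Finset.sum_empty]
    have h1 : (0:ℝ) ≤ 2 / (α ^ 2 * η) := by positivity
    have h2 : (0:ℝ) ≤ ‖x - x'‖ ^ 2 + ∑ j ∈ Finset.Icc 1 (m + 0), ‖z j - z' j‖ ^ 2 := by
      positivity
    exact mul_nonneg h1 h2
  -- notation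
  set u : ℝ := ‖x - x'‖ with hu
  set v : ℕ → ℝ := fun j => ‖z j - z' j‖ with hv
  set s : ℝ := Real.sqrt (2 * η) with hsdef
  have hs0 : 0 ≤ s := Real.sqrt_nonneg _
  have hs2 : s ^ 2 = 2 * η := Real.sq_sqrt (by positivity)
  have hu0 : 0 ≤ u := norm_nonneg _
  have hv0 : ∀ j, 0 ≤ v j := fun j => norm_nonneg _
  have h1L : 0 < 1 - L := by linarith
  set a : ℕ → ℝ := fun i =>
    Real.sqrt κ₀ * L ^ i * u + ∑ j ∈ Finset.Icc 1 i, s * L ^ (i - j) * v j with hadef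
  have ha0 : ∀ i, 0 ≤ a i := by
    intro i
    apply add_nonneg
    · positivity
    · exact Finset.sum_nonneg fun j _ => by positivity
  have hga : ∀ i, ‖g i (x, z) - g i (x', z')‖ ^ 2 ≤ (a i) ^ 2 := by
    intro i
    exact pow_le_pow_left₀ (norm_nonneg _) (hg i x x' z z') 2
  -- recursion
  have hrec : ∀ i, a (i + 1) = L * a i + s * v (i + 1) := by
    intro i
    simp only [hadef]
    rw [Finset.sum_Icc_succ_top (by omega : 1 ≤ i + 1)]
    have hcong : ∀ j ∈ Finset.Icc 1 i, s * L ^ (i + 1 - j) * v j = L * (s * L ^ (i - j) * v j) := by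
      intro j hj
      simp only [Finset.mem_Icc] at hj
      rw [show i + 1 - j = (i - j) + 1 by omega, pow_succ]
      ring
    rw [Finset.sum_congr rfl hcong, ← Finset.mul_sum]
    simp only [Nat.sub_self, pow_zero, pow_succ]
    ring
  -- one-step energy estimate
  have hstep : ∀ i, (1 - L) * (a (i + 1)) ^ 2
      ≤ (1 - L) * (L * (a i) ^ 2) + 2 * η * (v (i + 1)) ^ 2 := by
    intro i
    rw [hrec i, ← hs2]
    nlinarith [mul_nonneg hL0 (sq_nonneg ((1 - L) * a i - s * v (i + 1)))]
  -- main induction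
  have Q : ∀ k, 1 ≤ k →
      (1 - L) ^ 2 * (∑ i ∈ Finset.Icc (m + 1) (m + k), (a i) ^ 2)
        + (1 - L) * L * (a (m + k)) ^ 2
      ≤ (1 - L) * (a (m + 1)) ^ 2
        + 2 * η * ∑ i ∈ Finset.Icc (m + 2) (m + k), (v i) ^ 2 := by
    intro k hk
    induction k, hk using Nat.le_induction with
    | base =>
      rw [Finset.Icc_self, Finset.sum_singleton,
        Finset.Icc_eq_empty (by omega), Finset.sum_empty]
      nlinarith [sq_nonneg (a (m + 1))]
    | succ k hk ih =>
      rw [show m + (k + 1) = (m + k) + 1 by omega,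
        Finset.sum_Icc_succ_top (by omega : m + 1 ≤ m + k + 1),
        Finset.sum_Icc_succ_top (by omega : m + 2 ≤ m + k + 1)]
      have h := hstep (m + k)
      linarith [ih]
  -- Cauchy–Schwarz for the initial term
  have hCS : (1 - L) * (a (m + 1)) ^ 2
      ≤ 2 * η * (u ^ 2 + ∑ j ∈ Finset.Icc 1 (m + 1), (v j) ^ 2) := by
    set c₀ : ℝ := Real.sqrt κ₀ * L ^ (m + 1) with hc₀def
    set W : ℝ := ∑ j ∈ Finset.Icc 1 (m + 1), s * L ^ (m + 1 - j) * v j with hWdef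
    set C : ℝ := ∑ j ∈ Finset.Icc 1 (m + 1), (s * L ^ (m + 1 - j)) ^ 2 with hCdef
    set V : ℝ := ∑ j ∈ Finset.Icc 1 (m + 1), (v j) ^ 2 with hVdef
    have hc₀0 : 0 ≤ c₀ := by positivity
    have hC0 : 0 ≤ C := Finset.sum_nonneg fun j _ => sq_nonneg _
    have hV0 : 0 ≤ V := Finset.sum_nonneg fun j _ => sq_nonneg _
    have hW0 : 0 ≤ W := Finset.sum_nonneg fun j _ => by positivity
    have hW2 : W ^ 2 ≤ C * V := Finset.sum_mul_sq_le_sq_mul_sq _ _ _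
    have haeq : a (m + 1) = c₀ * u + W := rfl
    -- Cauchy–Schwarz combined with the x-term
    have hA2 : (a (m + 1)) ^ 2 ≤ (c₀ ^ 2 + C) * (u ^ 2 + V) := by
      rw [haeq]
      clear_value W C V c₀
      by_cases hVz : V = 0
      · subst hVz
        have hWz : W = 0 := by nlinarith [sq_nonneg W]
        rw [hWz]
        nlinarith [mul_nonneg hC0 (sq_nonneg u)]
      · have hVpos : 0 < V := lt_of_le_of_ne hV0 (Ne.symm hVz)
        nlinarith [sq_nonneg (c₀ * V - W * u), mul_nonneg (sub_nonneg.2 hW2)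
          (add_nonneg (sq_nonneg u) hV0)]
    -- bound the coefficient sum
    have hC2 : (1 - L) * (c₀ ^ 2 + C) ≤ 2 * η := by
      have hc₀sq : c₀ ^ 2 ≤ 2 * η * L ^ (m + 1) := by
        have : c₀ ^ 2 = κ₀ * L ^ (m + 1) * L ^ (m + 1) := by
          rw [hc₀def, mul_pow, Real.sq_sqrt hκ₀]; ring
        rw [this]
        exact mul_le_mul_of_nonneg_right hburn (pow_nonneg hL0 _)
      have hLm : L ^ (m + 1) ≤ L := by
        calc L ^ (m + 1) ≤ L ^ 1 := pow_le_pow_of_le_one hL0 hL1.le (by omega)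
        _ = L := pow_one L
      have hCeq : C = 2 * η * ∑ j ∈ Finset.Icc 1 (m + 1), (L ^ 2) ^ (m + 1 - j) := by
        rw [hCdef, Finset.mul_sum]
        apply Finset.sum_congr rfl
        intro j hj
        rw [mul_pow, hs2, ← pow_mul, ← pow_mul]
        ring_nf
      have hG0 : 0 ≤ ∑ j ∈ Finset.Icc 1 (m + 1), (L ^ 2) ^ (m + 1 - j) :=
        Finset.sum_nonneg fun j _ => pow_nonneg (sq_nonneg L) _
      have hG : (∑ j ∈ Finset.Icc 1 (m + 1), (L ^ 2) ^ (m + 1 - j)) * (1 - L ^ 2) ≤ 1 :=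
        geomIcc_aux (L ^ 2) (sq_nonneg L) (m + 1)
      set G : ℝ := ∑ j ∈ Finset.Icc 1 (m + 1), (L ^ 2) ^ (m + 1 - j) with hGdef
      rw [hCeq]
      clear_value G
      have hpow0 : 0 ≤ L ^ (m + 1) := pow_nonneg hL0 _
      set P : ℝ := L ^ (m + 1) with hPdef
      clear_value P
      nlinarith [mul_nonneg hη.le hG0, mul_nonneg (mul_nonneg hη.le hL0) hpow0,
        mul_nonneg hη.le (mul_nonneg hL0 hpow0), mul_nonneg hη.le hpow0]
    calc (1 - L) * (a (m + 1)) ^ 2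
        ≤ (1 - L) * ((c₀ ^ 2 + C) * (u ^ 2 + V)) :=
          mul_le_mul_of_nonneg_left hA2 h1L.le
      _ = ((1 - L) * (c₀ ^ 2 + C)) * (u ^ 2 + V) := by ring
      _ ≤ 2 * η * (u ^ 2 + V) :=
          mul_le_mul_of_nonneg_right hC2 (add_nonneg (sq_nonneg u) hV0)
  -- split the z-sum
  have hsplit : (∑ j ∈ Finset.Icc 1 (m + 1), (v j) ^ 2)
      + (∑ j ∈ Finset.Icc (m + 2) (m + n), (v j) ^ 2)
      ≤ ∑ j ∈ Finset.Icc 1 (m + n), (v j) ^ 2 := by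
    have hdisj : Disjoint (Finset.Icc 1 (m + 1)) (Finset.Icc (m + 2) (m + n)) := by
      rw [Finset.disjoint_left]
      intro j hj hj'
      simp only [Finset.mem_Icc] at hj hj'
      omega
    rw [← Finset.sum_union hdisj]
    apply Finset.sum_le_sum_of_subset_of_nonneg
    · intro j hj
      simp only [Finset.mem_union, Finset.mem_Icc] at hj ⊢
      omega
    · intro j _ _
      exact sq_nonneg _
  -- combine
  have hsum1 : ∑ i ∈ Finset.Icc (m + 1) (m + n), ‖g i (x, z) - g i (x', z')‖ ^ 2
      ≤ ∑ i ∈ Finset.Icc (m + 1) (m + n), (a i) ^ 2 :=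
    Finset.sum_le_sum fun i _ => hga i
  have hQ := Q n hn
  have hrem : 0 ≤ (1 - L) * L * (a (m + n)) ^ 2 :=
    mul_nonneg (mul_nonneg h1L.le hL0) (sq_nonneg _)
  have hfin : (∑ i ∈ Finset.Icc (m + 1) (m + n), ‖g i (x, z) - g i (x', z')‖ ^ 2)
      * (1 - L) ^ 2
      ≤ 2 * η * (u ^ 2 + ∑ j ∈ Finset.Icc 1 (m + n), (v j) ^ 2) := by
    have h1 := mul_le_mul_of_nonneg_left hsum1 (sq_nonneg (1 - L))
    have h2 := mul_le_mul_of_nonneg_left hsplit (by positivity : (0:ℝ) ≤ 2 * η)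
    linarith [h1, hQ, hrem, hCS, h2]
  have hαη : (1 - L) = α * η := by rw [hL]; ring
  have hcoef : (2 : ℝ) / (α ^ 2 * η) = 2 * η / (1 - L) ^ 2 := by
    rw [hαη]
    field_simp
  rw [hcoef, div_mul_eq_mul_div, le_div_iff₀ (by positivity : (0:ℝ) < (1 - L) ^ 2)]
  linarith [hfin]
end

section
/- For any probability distributions μ and ν on ℝ^d with finite second moments, and any z ∈ ℝ^d, ‖E_{X∼μ}[(X−z)(X−z)ᵀ] − E_{Y∼ν}[(Y−z)(Y−z)ᵀ]‖ ≤ (sqrt(∫|x−z|² dμ) + sqrt(∫|y−z|² dν)) · W₂(μ, ν). -/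
open MeasureTheory Real

/-- The operator (spectral) norm of a square matrix. -/
noncomputable def opNorm {k : ℕ} (A : Matrix (Fin k) (Fin k) ℝ) : ℝ :=
  ‖LinearMap.toContinuousLinearMap (Matrix.toEuclideanLin A)‖

/-- The 2-Wasserstein distance between two probability measures on `ℝ^d`,
defined as the infimum of quadratic transport costs over couplings. -/
noncomputable def W2 {d : ℕ} (μ ν : Measure (EuclideanSpace ℝ (Fin d))) : ℝ :=
  sInf {r : ℝ | ∃ γ : Measure (EuclideanSpace ℝ (Fin d) × EuclideanSpace ℝ (Fin d)),
    IsProbabilityMeasure γ ∧ γ.map Prod.fst = μ ∧ γ.map Prod.snd = ν ∧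
    r = Real.sqrt (∫ p, ‖p.1 - p.2‖ ^ 2 ∂γ)}

/-- The second-moment matrix `E[(X - z)(X - z)ᵀ]` of a distribution about a point `z`. -/
noncomputable def secondMomentAbout {d : ℕ} (μ : Measure (EuclideanSpace ℝ (Fin d)))
    (z : EuclideanSpace ℝ (Fin d)) : Matrix (Fin d) (Fin d) ℝ :=
  fun i j => ∫ x, (x i - z i) * (x j - z j) ∂μ

open scoped RealInnerProductSpace

/-!
Couple `X ~ μ` and `Y ~ ν` by any `γ`. Tested against vectors `u, v`, the difference of the
second-moment matrices is
`E[⟪u, X - z⟫⟪v, X - z⟫ - ⟪u, Y - z⟫⟪v, Y - z⟫]`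
`  = E[⟪u, X - z⟫⟪v, X - Y⟫] + E[⟪u, X - Y⟫⟪v, Y - z⟫]`,
and Cauchy–Schwarz bounds the right side by `‖u‖ ‖v‖ (‖X - z‖₂ + ‖Y - z‖₂) ‖X - Y‖₂`.
So the operator norm is at most `(‖X - z‖₂ + ‖Y - z‖₂) ‖X - Y‖₂` for every coupling, and taking
the infimum over couplings gives the bound with `W₂(μ, ν)`.
-/

section CauchySchwarz

variable {α E : Type*} [MeasurableSpace α] {μ : Measure α}
  [NormedAddCommGroup E]

theorem integral_norm_mul_norm_le {F G : α → E} (hF : MemLp F 2 μ) (hG : MemLp G 2 μ) :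
    ∫ x, ‖F x‖ * ‖G x‖ ∂μ ≤ √(∫ x, ‖F x‖ ^ 2 ∂μ) * √(∫ x, ‖G x‖ ^ 2 ∂μ) := by
  have h := integral_mul_le_Lp_mul_Lq_of_nonneg Real.HolderConjugate.two_two
    (.of_forall fun x => norm_nonneg (F x)) (.of_forall fun x => norm_nonneg (G x))
    (by simpa using hF.norm) (by simpa using hG.norm)
  simpa only [Real.rpow_two, ← Real.sqrt_eq_rpow] using h

theorem abs_integral_inner_mul_inner_le [InnerProductSpace ℝ E] {F G : α → E}
    (hF : MemLp F 2 μ) (hG : MemLp G 2 μ) (u v : E) :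
    |∫ x, ⟪u, F x⟫ * ⟪v, G x⟫ ∂μ|
      ≤ ‖u‖ * ‖v‖ * (√(∫ x, ‖F x‖ ^ 2 ∂μ) * √(∫ x, ‖G x‖ ^ 2 ∂μ)) :=
  calc |∫ x, ⟪u, F x⟫ * ⟪v, G x⟫ ∂μ| ≤ ∫ x, ‖u‖ * ‖v‖ * (‖F x‖ * ‖G x‖) ∂μ := by
        refine abs_integral_le_integral_abs.trans (integral_mono_of_nonneg
          (.of_forall fun _ => abs_nonneg _) ((hF.norm.integrable_mul hG.norm).const_mul _)
          (.of_forall fun x => ?_))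
        dsimp only
        rw [abs_mul, mul_mul_mul_comm]
        exact mul_le_mul (abs_real_inner_le_norm _ _) (abs_real_inner_le_norm _ _)
          (abs_nonneg _) (by positivity)
    _ ≤ _ := by
        rw [integral_const_mul]
        exact mul_le_mul_of_nonneg_left (integral_norm_mul_norm_le hF hG) (by positivity)

end CauchySchwarz

theorem ContinuousLinearMap.opNorm_le_of_abs_inner_le {E : Type*} [NormedAddCommGroup E]
    [InnerProductSpace ℝ E] (T : E →L[ℝ] E) {C : ℝ} (hC : 0 ≤ C)
    (h : ∀ u v, |⟪u, T v⟫| ≤ ‖u‖ * ‖v‖ * C) : ‖T‖ ≤ C := by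
  refine T.opNorm_le_bound hC fun v => ?_
  have hv := h (T v) v
  rw [real_inner_self_eq_norm_sq, abs_of_nonneg (sq_nonneg _), sq, mul_assoc] at hv
  rcases (norm_nonneg (T v)).eq_or_lt with h0 | hpos
  · rw [← h0]; positivity
  · linarith [le_of_mul_le_mul_left hv hpos]

theorem abs_integral_inner_mul_inner_sub_le_of_coupling {E : Type*} [NormedAddCommGroup E]
    [InnerProductSpace ℝ E] [MeasurableSpace E] {μ ν : Measure E} {γ : Measure (E × E)}
    (hγμ : γ.map Prod.fst = μ) (hγν : γ.map Prod.snd = ν) {z : E}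
    (hμ : MemLp (fun x => x - z) 2 μ) (hν : MemLp (fun y => y - z) 2 ν) (u v : E) :
    |∫ x, ⟪u, x - z⟫ * ⟪v, x - z⟫ ∂μ - ∫ y, ⟪u, y - z⟫ * ⟪v, y - z⟫ ∂ν|
      ≤ ‖u‖ * ‖v‖ * ((√(∫ x, ‖x - z‖ ^ 2 ∂μ) + √(∫ y, ‖y - z‖ ^ 2 ∂ν))
        * √(∫ p, ‖p.1 - p.2‖ ^ 2 ∂γ)) := by
  subst hγμ hγν
  have hX : MemLp (fun p : E × E => p.1 - z) 2 γ := hμ.comp_of_map measurable_fst.aemeasurable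
  have hY : MemLp (fun p : E × E => p.2 - z) 2 γ := hν.comp_of_map measurable_snd.aemeasurable
  have hXY : MemLp (fun p : E × E => p.1 - p.2) 2 γ := by
    convert hX.sub hY using 1
    funext p
    exact (sub_sub_sub_cancel_right p.1 p.2 z).symm
  have hprod {F : E × E → E} (hF : MemLp F 2 γ) :
      Integrable (fun p => ⟪u, F p⟫ * ⟪v, F p⟫) γ :=
    (hF.const_inner u).integrable_mul (hF.const_inner v)
  have hsplit (p : E × E) : ⟪u, p.1 - z⟫ * ⟪v, p.1 - z⟫ - ⟪u, p.2 - z⟫ * ⟪v, p.2 - z⟫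
      = ⟪u, p.1 - z⟫ * ⟪v, p.1 - p.2⟫ + ⟪u, p.1 - p.2⟫ * ⟪v, p.2 - z⟫ := by
    simp only [inner_sub_right]
    ring
  rw [integral_map measurable_fst.aemeasurable ((hμ.const_inner u).1.mul (hμ.const_inner v).1),
    integral_map measurable_snd.aemeasurable ((hν.const_inner u).1.mul (hν.const_inner v).1),
    integral_map (f := fun x => ‖x - z‖ ^ 2) measurable_fst.aemeasurable (hμ.1.norm.pow 2),
    integral_map (f := fun y => ‖y - z‖ ^ 2) measurable_snd.aemeasurable (hν.1.norm.pow 2),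
    ← integral_sub (hprod hX) (hprod hY), integral_congr_ae (.of_forall hsplit),
    integral_add ((hX.const_inner u).integrable_mul (hXY.const_inner v))
      ((hXY.const_inner u).integrable_mul (hY.const_inner v))]
  calc _ ≤ _ := abs_add_le _ _
    _ ≤ _ := add_le_add (abs_integral_inner_mul_inner_le hX hXY u v)
        (abs_integral_inner_mul_inner_le hXY hY u v)
    _ = _ := by ring

section Euclidean

variable {d : ℕ}

local notation "E" => EuclideanSpace ℝ (Fin d)

theorem inner_toEuclideanLin_secondMomentAbout {μ : Measure E} {z : E}
    (hμ : MemLp (fun x => x - z) 2 μ) (u v : E) :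
    ⟪u, Matrix.toEuclideanLin (secondMomentAbout μ z) v⟫
      = ∫ x, ⟪u, x - z⟫ * ⟪v, x - z⟫ ∂μ := by
  have hcoord (i : Fin d) : MemLp (fun x : E => x i - z i) 2 μ := by
    simpa using hμ.continuousLinearMap_comp (EuclideanSpace.proj (𝕜 := ℝ) i)
  have hint (i j : Fin d) : Integrable (fun x : E => (x i - z i) * (x j - z j)) μ :=
    (hcoord i).integrable_mul (hcoord j)
  have hexpand (x : E) : ⟪u, x - z⟫ * ⟪v, x - z⟫
      = ∑ i, ∑ j, u i * v j * ((x i - z i) * (x j - z j)) := by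
    simp only [PiLp.inner_apply, RCLike.inner_apply, conj_trivial, PiLp.sub_apply,
      Finset.sum_mul_sum]
    exact Finset.sum_congr rfl fun i _ => Finset.sum_congr rfl fun j _ => by ring
  simp_rw [hexpand]
  rw [integral_finsetSum _ fun i _ => integrable_finsetSum _ fun j _ => (hint i j).const_mul _]
  simp only [PiLp.inner_apply, RCLike.inner_apply, conj_trivial, Matrix.toLpLin_apply,
    Matrix.mulVec, dotProduct, secondMomentAbout, Finset.sum_mul]
  refine Finset.sum_congr rfl fun i _ => ?_
  rw [integral_finsetSum _ fun j _ => (hint i j).const_mul _]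
  refine Finset.sum_congr rfl fun j _ => ?_
  rw [integral_const_mul]
  ring

theorem opNorm_secondMomentAbout_sub_le_of_coupling {μ ν : Measure E} {γ : Measure (E × E)}
    (hγμ : γ.map Prod.fst = μ) (hγν : γ.map Prod.snd = ν) {z : E}
    (hμ : MemLp (fun x => x - z) 2 μ) (hν : MemLp (fun y => y - z) 2 ν) :
    opNorm (secondMomentAbout μ z - secondMomentAbout ν z)
      ≤ (√(∫ x, ‖x - z‖ ^ 2 ∂μ) + √(∫ y, ‖y - z‖ ^ 2 ∂ν)) * √(∫ p, ‖p.1 - p.2‖ ^ 2 ∂γ) :=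
  ContinuousLinearMap.opNorm_le_of_abs_inner_le _ (by positivity) fun u v => by
    have h := abs_integral_inner_mul_inner_sub_le_of_coupling hγμ hγν hμ hν u v
    rwa [← inner_toEuclideanLin_secondMomentAbout hμ, ← inner_toEuclideanLin_secondMomentAbout hν,
      ← inner_sub_right, ← LinearMap.sub_apply, ← map_sub] at h

theorem le_mul_W2_of_forall_coupling {μ ν : Measure E}
    [IsProbabilityMeasure μ] [IsProbabilityMeasure ν] {a c : ℝ} (hc : 0 ≤ c)
    (h : ∀ γ : Measure (E × E), γ.map Prod.fst = μ → γ.map Prod.snd = ν →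
      a ≤ c * √(∫ p, ‖p.1 - p.2‖ ^ 2 ∂γ)) :
    a ≤ c * W2 μ ν := by
  rw [W2, ← smul_eq_mul, ← Real.sInf_smul_of_nonneg hc]
  refine le_csInf (Set.Nonempty.smul_set ⟨_, μ.prod ν, inferInstance, by simp, by simp, rfl⟩) ?_
  rintro _ ⟨_, ⟨γ, -, hγμ, hγν, rfl⟩, rfl⟩
  exact h γ hγμ hγν

end Euclidean

theorem stmt_11 (d : ℕ) (μ ν : Measure (EuclideanSpace ℝ (Fin d)))
    [IsProbabilityMeasure μ] [IsProbabilityMeasure ν]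
    (hμ2 : Integrable (fun x => ‖x‖ ^ 2) μ) (hν2 : Integrable (fun y => ‖y‖ ^ 2) ν)
    (z : EuclideanSpace ℝ (Fin d)) :
    opNorm (secondMomentAbout μ z - secondMomentAbout ν z)
      ≤ (Real.sqrt (∫ x, ‖x - z‖ ^ 2 ∂μ) + Real.sqrt (∫ y, ‖y - z‖ ^ 2 ∂ν)) * W2 μ ν := by
  have hμz : MemLp (fun x => x - z) 2 μ :=
    ((memLp_two_iff_integrable_sq_norm aestronglyMeasurable_id).2 hμ2).sub (memLp_const z)
  have hνz : MemLp (fun y => y - z) 2 ν :=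
    ((memLp_two_iff_integrable_sq_norm aestronglyMeasurable_id).2 hν2).sub (memLp_const z)
  exact le_mul_W2_of_forall_coupling (by positivity) fun γ hγμ hγν =>
    opNorm_secondMomentAbout_sub_le_of_coupling hγμ hγν hμz hνz
end
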